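/- arXiv:2605.27292 — 4 statements merged into one kernel-verified Lean document; each statement's English description precedes it below -/
import Mathlib

section
/- Let X be an n×d real matrix of rank d, y ∈ ℝⁿ, K = XᵀX, θ* = K⁻¹Xᵀy, and let (x₁,y₁), (x₂,y₂) ∈ ℝᵈ × ℝ be two additional points. Let θ₁* be the least squares solution after adding (x₁,y₁) to the data. With squared loss ℓ(θ,(x,y)) = ½(⟨θ,x⟩ − y)², one has ℓ(θ₁*,(x₂,y₂)) − ℓ(θ*,(x₂,y₂)) = ℓ(θ*,(x₁,y₁))·(x₁ᵀK⁻¹x₂/(1 + x₁ᵀK⁻¹x₁))² − (⟨θ*,x₁⟩ − y₁)(⟨θ*,x₂⟩ − y₂)·x₁ᵀK⁻¹x₂/(1 + x₁ᵀK⁻¹x₁). -/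
/-!
Adding the point `(x₁, y₁)` is a rank-one update of the normal equations: the Gram matrix becomes
`K + x₁ x₁ᵀ` and the right-hand side `Xᵀ y + y₁ x₁`. By Sherman–Morrison the new solution is
`θ₁ = θ* - e₁ / (1 + x₁ᵀ K⁻¹ x₁) • K⁻¹ x₁` with `e₁ = ⟨θ*, x₁⟩ - y₁`, so, `K⁻¹` being symmetric, the
residual at `x₂` moves by `-e₁ · x₁ᵀ K⁻¹ x₂ / (1 + x₁ᵀ K⁻¹ x₁)`; expanding the square gives the
formula. Full column rank makes `K` positive definite, which keeps the denominator positive.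
-/

open Matrix

noncomputable def sqLoss {d : ℕ} (θ x : Fin d → ℝ) (y : ℝ) : ℝ :=
  (1 / 2) * (θ ⬝ᵥ x - y) ^ 2

namespace Matrix

variable {m n : Type*}

theorem transpose_mul_self_of_snoc {R : Type*} [Semiring R] {k : ℕ} (X : Matrix (Fin k) n R)
    (x : n → R) :
    (of (Fin.snoc (fun i => X i) x))ᵀ * of (Fin.snoc (fun i => X i) x) = Xᵀ * X + vecMulVec x x := by
  ext i j
  simp [mul_apply, vecMulVec_apply, Fin.sum_univ_castSucc]

theorem transpose_of_snoc_mulVec_snoc {R : Type*} [CommSemiring R] {k : ℕ} (X : Matrix (Fin k) n R)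
    (x : n → R) (y : Fin k → R) (c : R) :
    (of (Fin.snoc (fun i => X i) x))ᵀ *ᵥ Fin.snoc y c = Xᵀ *ᵥ y + c • x := by
  ext i
  simp [mulVec, dotProduct, Fin.sum_univ_castSucc, mul_comm]

variable [Fintype n]

theorem mulVec_injective_of_rank_eq_card {K : Type*} [Field K] [Fintype m] (A : Matrix m n K)
    (hA : A.rank = Fintype.card n) : Function.Injective A.mulVec := by
  have h := LinearMap.finrank_range_add_finrank_ker A.mulVecLin
  rw [← rank, hA, Module.finrank_fintype_fun_eq_card, Nat.add_eq_left,
    Submodule.finrank_eq_zero] at h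
  exact LinearMap.ker_eq_bot.mp h

theorem posDef_transpose_mul_self_of_rank_eq_card [Fintype m] (X : Matrix m n ℝ)
    (hX : X.rank = Fintype.card n) : (Xᵀ * X).PosDef := by
  simpa only [conjTranspose_eq_transpose_of_trivial] using
    PosDef.conjTranspose_mul_self X (mulVec_injective_of_rank_eq_card X hX)

theorem IsSymm.mulVec_dotProduct {R : Type*} [CommSemiring R] {A : Matrix n n R} (hA : A.IsSymm)
    (v w : n → R) : (A *ᵥ v) ⬝ᵥ w = v ⬝ᵥ (A *ᵥ w) := by
  rw [dotProduct_mulVec, ← vecMul_transpose, hA.eq, dotProduct_comm]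

variable [DecidableEq n] {𝕜 : Type*} [Field 𝕜]

theorem isUnit_det_add_vecMulVec {K : Matrix n n 𝕜} (hK : IsUnit K.det) (u v : n → 𝕜)
    (hden : 1 + v ⬝ᵥ (K⁻¹ *ᵥ u) ≠ 0) : IsUnit (K + vecMulVec u v).det := by
  rw [vecMulVec_eq Unit, det_add_replicateCol_mul_replicateRow hK, Matrix.mul_assoc,
    ← replicateCol_mulVec, det_unique (1 + _ : Matrix Unit Unit 𝕜), add_apply, one_apply_eq,
    replicateRow_mul_replicateCol_apply]
  exact hK.mul hden.isUnit

theorem inv_add_vecMulVec_mulVec_add_smul {K : Matrix n n 𝕜} (hK : IsUnit K.det) (u v b : n → 𝕜)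
    (c : 𝕜) (hden : 1 + v ⬝ᵥ (K⁻¹ *ᵥ u) ≠ 0) :
    (K + vecMulVec u v)⁻¹ *ᵥ (b + c • u) =
      K⁻¹ *ᵥ b - ((v ⬝ᵥ (K⁻¹ *ᵥ b) - c) / (1 + v ⬝ᵥ (K⁻¹ *ᵥ u))) • (K⁻¹ *ᵥ u) := by
  set t := (v ⬝ᵥ (K⁻¹ *ᵥ b) - c) / (1 + v ⬝ᵥ (K⁻¹ *ᵥ u))
  have hsolve : (K + vecMulVec u v) *ᵥ (K⁻¹ *ᵥ b - t • (K⁻¹ *ᵥ u)) = b + c • u := by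
    have ht : v ⬝ᵥ (K⁻¹ *ᵥ b) - t * (v ⬝ᵥ (K⁻¹ *ᵥ u)) = c + t := by
      simp only [t]; field_simp; ring
    have hKK (w : n → 𝕜) : K *ᵥ (K⁻¹ *ᵥ w) = w := by
      rw [mulVec_mulVec, mul_nonsing_inv _ hK, one_mulVec]
    rw [add_mulVec, vecMulVec_mulVec, op_smul_eq_smul, mulVec_sub, mulVec_smul, hKK, hKK,
      dotProduct_sub, dotProduct_smul, smul_eq_mul, ht, add_smul]
    abel
  rw [← hsolve, mulVec_mulVec, nonsing_inv_mul _ (isUnit_det_add_vecMulVec hK u v hden), one_mulVec]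

end Matrix

theorem canary_interference_ls {n d : ℕ}
    (X : Matrix (Fin n) (Fin d) ℝ) (hX : X.rank = d)
    (y : Fin n → ℝ) (x₁ x₂ : Fin d → ℝ) (y₁ y₂ : ℝ)
    (K : Matrix (Fin d) (Fin d) ℝ) (hK : K = Xᵀ * X)
    (θs : Fin d → ℝ) (hθs : θs = K⁻¹ *ᵥ (Xᵀ *ᵥ y))
    (Xt : Matrix (Fin (n + 1)) (Fin d) ℝ) (hXt : Xt = Matrix.of (Fin.snoc (fun i => X i) x₁))
    (yt : Fin (n + 1) → ℝ) (hyt : yt = Fin.snoc y y₁)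
    (θ₁ : Fin d → ℝ) (hθ₁ : θ₁ = (Xtᵀ * Xt)⁻¹ *ᵥ (Xtᵀ *ᵥ yt)) :
    sqLoss θ₁ x₂ y₂ - sqLoss θs x₂ y₂ =
      sqLoss θs x₁ y₁ * (x₁ ⬝ᵥ (K⁻¹ *ᵥ x₂) / (1 + x₁ ⬝ᵥ (K⁻¹ *ᵥ x₁))) ^ 2 -
        (θs ⬝ᵥ x₁ - y₁) * (θs ⬝ᵥ x₂ - y₂) *
          (x₁ ⬝ᵥ (K⁻¹ *ᵥ x₂) / (1 + x₁ ⬝ᵥ (K⁻¹ *ᵥ x₁))) := by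
  have hKpd : K.PosDef := hK ▸ posDef_transpose_mul_self_of_rank_eq_card X (by simpa using hX)
  have hden : 1 + x₁ ⬝ᵥ (K⁻¹ *ᵥ x₁) ≠ 0 := by
    have := hKpd.inv.posSemidef.dotProduct_mulVec_nonneg x₁
    rw [star_trivial] at this
    positivity
  have hθ₁_eq : θ₁ = θs - ((θs ⬝ᵥ x₁ - y₁) / (1 + x₁ ⬝ᵥ (K⁻¹ *ᵥ x₁))) • (K⁻¹ *ᵥ x₁) := by
    rw [hθ₁, hXt, hyt, transpose_mul_self_of_snoc, transpose_of_snoc_mulVec_snoc, ← hK,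
      inv_add_vecMulVec_mulVec_add_smul (isUnit_iff_ne_zero.mpr hKpd.det_pos.ne') _ _ _ _ hden,
      ← hθs, dotProduct_comm]
  have hKsymm : K⁻¹.IsSymm := isHermitian_iff_isSymm.mp hKpd.inv.isHermitian
  simp only [sqLoss, hθ₁_eq, sub_dotProduct, smul_dotProduct, smul_eq_mul,
    hKsymm.mulVec_dotProduct]
  ring
end

section
/- In the setting of the previous result, if x₁ᵀK⁻¹x₂ = 0 (orthogonality with respect to the inverse empirical covariance), then adding the canary (x₁,y₁) to the training set does not change the squared loss at (x₂,y₂): ℓ(θ₁*,(x₂,y₂)) = ℓ(θ*,(x₂,y₂)). -/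
open Matrix

lemma aux_inj {n d : ℕ} (A : Matrix (Fin n) (Fin d) ℝ) (hA : A.rank = d) :
    Function.Injective A.mulVec := by
  have h1 := LinearMap.finrank_range_add_finrank_ker A.mulVecLin
  rw [show Module.finrank ℝ (LinearMap.range A.mulVecLin) = d from hA] at h1
  simp only [Module.finrank_fintype_fun_eq_card, Fintype.card_fin] at h1
  have hker : LinearMap.ker A.mulVecLin = ⊥ := Submodule.finrank_eq_zero.mp (by omega)
  exact LinearMap.ker_eq_bot.mp hker

lemma aux_isUnit {n d : ℕ} (A : Matrix (Fin n) (Fin d) ℝ)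
    (hA : Function.Injective A.mulVec) : IsUnit (Aᵀ * A) := by
  rw [← Matrix.mulVec_injective_iff_isUnit]
  have h2 : Function.Injective ⇑(Aᵀ * A).mulVecLin → Function.Injective (Aᵀ * A).mulVec :=
    fun h => h
  apply h2
  rw [← LinearMap.ker_eq_bot (f := (Aᵀ * A).mulVecLin),
    Matrix.ker_mulVecLin_transpose_mul_self, LinearMap.ker_eq_bot]
  exact hA

lemma aux_dp {d m : ℕ} (A : Matrix (Fin m) (Fin d) ℝ) (u : Fin d → ℝ) (w : Fin m → ℝ) :
    (A *ᵥ u) ⬝ᵥ w = u ⬝ᵥ (Aᵀ *ᵥ w) := by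
  rw [dotProduct_comm, dotProduct_mulVec, ← mulVec_transpose, dotProduct_comm]

theorem canary_orthogonality_no_interference {n d : ℕ}
    (X : Matrix (Fin n) (Fin d) ℝ) (hX : X.rank = d)
    (y : Fin n → ℝ) (x₁ x₂ : Fin d → ℝ) (y₁ y₂ : ℝ)
    (K : Matrix (Fin d) (Fin d) ℝ) (hK : K = Xᵀ * X)
    (θs : Fin d → ℝ) (hθs : θs = K⁻¹ *ᵥ (Xᵀ *ᵥ y))
    (Xt : Matrix (Fin (n + 1)) (Fin d) ℝ) (hXt : Xt = Matrix.of (Fin.snoc (fun i => X i) x₁))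
    (yt : Fin (n + 1) → ℝ) (hyt : yt = Fin.snoc y y₁)
    (θ₁ : Fin d → ℝ) (hθ₁ : θ₁ = (Xtᵀ * Xt)⁻¹ *ᵥ (Xtᵀ *ᵥ yt))
    (horth : x₁ ⬝ᵥ (K⁻¹ *ᵥ x₂) = 0) :
    sqLoss θ₁ x₂ y₂ = sqLoss θs x₂ y₂ := by

  -- basic invertibility facts
  have hKunit : IsUnit K := hK ▸ aux_isUnit X (aux_inj X hX)
  have hKdet : IsUnit K.det := (isUnit_iff_isUnit_det K).mp hKunit
  have hXtinj : Function.Injective Xt.mulVec := by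
    intro u w huw
    apply aux_inj X hX
    funext k
    have := congrFun huw (Fin.castSucc k)
    simpa [hXt, mulVec, dotProduct] using this
  have hKtunit : IsUnit (Xtᵀ * Xt) := aux_isUnit Xt hXtinj
  have hKtdet : IsUnit (Xtᵀ * Xt).det := (isUnit_iff_isUnit_det _).mp hKtunit
  -- structure of the augmented Gram matrix and rhs
  have hKt : Xtᵀ * Xt = K + vecMulVec x₁ x₁ := by
    rw [hK]
    ext i j
    simp [mul_apply, hXt, Fin.sum_univ_castSucc, vecMulVec_apply]
  have hv : Xtᵀ *ᵥ yt = Xᵀ *ᵥ y + y₁ • x₁ := by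
    funext i
    simp [hXt, hyt, mulVec, dotProduct, Fin.sum_univ_castSucc, mul_comm]
  -- symmetry
  have hKsym : Kᵀ = K := by rw [hK]; simp [transpose_mul]
  have hKinvsym : (K⁻¹)ᵀ = K⁻¹ := by rw [transpose_nonsing_inv, hKsym]
  have hKtsym : ((Xtᵀ * Xt)⁻¹)ᵀ = (Xtᵀ * Xt)⁻¹ := by
    rw [transpose_nonsing_inv, transpose_mul, transpose_transpose]
  -- the key: (Xtᵀ Xt)⁻¹ x₂ = K⁻¹ x₂
  have hw : (Xtᵀ * Xt) *ᵥ (K⁻¹ *ᵥ x₂) = x₂ := by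
    rw [hKt, add_mulVec, mulVec_mulVec, mul_nonsing_inv K hKdet, one_mulVec]
    have : vecMulVec x₁ x₁ *ᵥ (K⁻¹ *ᵥ x₂) = (x₁ ⬝ᵥ (K⁻¹ *ᵥ x₂)) • x₁ := by
      funext i
      simp only [vecMulVec_apply, mulVec, dotProduct, Pi.smul_apply, smul_eq_mul,
        Finset.sum_mul, Finset.mul_sum]
      refine Finset.sum_congr rfl fun j _ => Finset.sum_congr rfl fun k _ => by ring
    rw [this, horth, zero_smul, add_zero]
  have hw2 : (Xtᵀ * Xt)⁻¹ *ᵥ x₂ = K⁻¹ *ᵥ x₂ := by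
    conv_lhs => rw [← hw]
    rw [mulVec_mulVec, nonsing_inv_mul _ hKtdet, one_mulVec]
  -- conclude the dot products are equal
  have key : θ₁ ⬝ᵥ x₂ = θs ⬝ᵥ x₂ := by
    have L : θ₁ ⬝ᵥ x₂ = (Xᵀ *ᵥ y) ⬝ᵥ (K⁻¹ *ᵥ x₂) := by
      rw [hθ₁, aux_dp, hKtsym, hw2, hv, add_dotProduct, smul_dotProduct,
        smul_eq_mul, horth, mul_zero, add_zero]
    have R : θs ⬝ᵥ x₂ = (Xᵀ *ᵥ y) ⬝ᵥ (K⁻¹ *ᵥ x₂) := by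
      rw [hθs, aux_dp, hKinvsym]
    rw [L, R]
  unfold sqLoss
  rw [key]
end

section
/- Let ℓ: ℝᵖ → ℝ be μ-strongly convex and differentiable for each data point, and define L(θ) = (1/n)∑ᵢ₌₁ⁿ ℓᵢ(θ). For any z with associated μ-strongly convex differentiable loss ℓ_z and any α ≥ 0, both L and L + αℓ_z have unique minimizers θ* and θ*_α, and ‖θ*_α − θ*‖ ≤ α‖∇ℓ_z(θ*)‖/((1+α)μ). -/
/-!
Strong convexity gives two inequalities: quadratic growth `f x + m/2 ‖y - x‖² ≤ f y` away from
a minimiser `x`, and the gradient inequality `f x + ⟪∇f x, y - x⟫ + m/2 ‖y - x‖² ≤ f y`; both are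
limits of the defining inequality along the segment from `x` to `y`. The gradient inequality at `0`
makes a differentiable strongly convex function coercive, so it has a minimiser, unique by strict
convexity. For the shift, with `d = θ*_α - θ*`, add quadratic growth of `L` at `θ*`, the gradient
inequality of `ℓ_z` at `θ*` and quadratic growth of the `(1+α)μ`-strongly convex `L + α ℓ_z` at
`θ*_α`: the function values cancel and leave `(1+α)μ ‖d‖² ≤ -α ⟪∇ℓ_z θ*, d⟫ ≤ α ‖∇ℓ_z θ*‖ ‖d‖`.
-/

open Set Filter Topology

lemma add_le_of_tendsto_of_forall_Ioc {φ : ℝ → ℝ} {a b c : ℝ} (hφ : Tendsto φ (𝓝[>] 0) (𝓝 a))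
    (h : ∀ t ∈ Ioc (0 : ℝ) 1, φ t + (1 - t) * c ≤ b) : a + c ≤ b := by
  have hlim : Tendsto (fun t => φ t + (1 - t) * c) (𝓝[>] 0) (𝓝 (a + (1 - 0) * c)) :=
    hφ.add (((continuous_const.sub continuous_id).mul continuous_const).tendsto 0
      |>.mono_left nhdsWithin_le_nhds)
  rw [sub_zero, one_mul] at hlim
  exact le_of_tendsto hlim (eventually_of_mem (Ioc_mem_nhdsGT zero_lt_one) h)

namespace StrongConvexOn

section NormedSpace

variable {E : Type*} [NormedAddCommGroup E] [NormedSpace ℝ E] {s : Set E} {m : ℝ} {f : E → ℝ}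

lemma const_mul {c : ℝ} (hc : 0 ≤ c) (hf : StrongConvexOn s m f) :
    StrongConvexOn s (c * m) fun x => c * f x := by
  refine ⟨hf.1, fun x hx y hy a b ha hb hab => ?_⟩
  have h := mul_le_mul_of_nonneg_left (hf.2 hx hy ha hb hab) hc
  simp only [smul_eq_mul] at h ⊢
  linarith

protected lemma add {n : ℝ} {g : E → ℝ} (hf : StrongConvexOn s m f) (hg : StrongConvexOn s n g) :
    StrongConvexOn s (m + n) fun x => f x + g x := by
  have h := UniformConvexOn.add hf hg
  have hφ : ((fun r : ℝ => m / 2 * r ^ 2) + fun r => n / 2 * r ^ 2) =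
      fun r => (m + n) / 2 * r ^ 2 := by
    funext r
    simp only [Pi.add_apply]
    ring
  rwa [hφ] at h

protected lemma sum {ι : Type*} {t : Finset ι} {f : ι → E → ℝ} (hs : Convex ℝ s)
    (hf : ∀ i ∈ t, StrongConvexOn s m (f i)) :
    StrongConvexOn s (t.card * m) fun x => ∑ i ∈ t, f i x := by
  classical
  induction t using Finset.induction_on with
  | empty => simpa using (convexOn_const (0 : ℝ) hs)
  | @insert a t hat ih =>
    simp only [Finset.sum_insert hat, Finset.card_insert_of_notMem hat, Nat.cast_succ, add_mul,
      one_mul, add_comm _ m]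
    exact (hf a (Finset.mem_insert_self a t)).add
      (ih fun i hi => hf i (Finset.mem_insert_of_mem hi))

lemma slope_add_le (hf : StrongConvexOn s m f) {x y : E} (hx : x ∈ s) (hy : y ∈ s) {t : ℝ}
    (ht₀ : 0 < t) (ht₁ : t ≤ 1) :
    t⁻¹ * (f (x + t • (y - x)) - f x) + (1 - t) * (m / 2 * ‖y - x‖ ^ 2) ≤ f y - f x := by
  have hseg : x + t • (y - x) = (1 - t) • x + t • y := by
    simp only [smul_sub, sub_smul, one_smul]
    abel
  have h := hf.2 hx hy (sub_nonneg.2 ht₁) ht₀.le (sub_add_cancel 1 t)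
  rw [← hseg, norm_sub_rev, smul_eq_mul, smul_eq_mul] at h
  have hslope : t⁻¹ * (f (x + t • (y - x)) - f x) ≤
      f y - f x - (1 - t) * (m / 2 * ‖y - x‖ ^ 2) :=
    (inv_mul_le_iff₀ ht₀).2 (by linarith)
  linarith

lemma add_sq_le_of_isMinOn (hf : StrongConvexOn s m f) {x y : E} (hmin : IsMinOn f s x)
    (hx : x ∈ s) (hy : y ∈ s) :
    f x + m / 2 * ‖y - x‖ ^ 2 ≤ f y := by
  have h : 0 + m / 2 * ‖y - x‖ ^ 2 ≤ f y - f x :=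
    add_le_of_tendsto_of_forall_Ioc tendsto_const_nhds fun t ⟨ht₀, ht₁⟩ => by
      have hslope : 0 ≤ t⁻¹ * (f (x + t • (y - x)) - f x) :=
        mul_nonneg (inv_nonneg.2 ht₀.le)
          (sub_nonneg.2 (hmin (hf.1.add_smul_sub_mem hx hy ⟨ht₀.le, ht₁⟩)))
      linarith [hf.slope_add_le hx hy ht₀ ht₁]
  linarith

end NormedSpace

section InnerProductSpace

variable {E : Type*} [NormedAddCommGroup E] [InnerProductSpace ℝ E] {s : Set E} {m : ℝ}
  {f : E → ℝ}

lemma add_inner_add_sq_le [CompleteSpace E] (hf : StrongConvexOn s m f) {x y v : E}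
    (hv : HasGradientAt f v x) (hx : x ∈ s) (hy : y ∈ s) :
    f x + inner ℝ v (y - x) + m / 2 * ‖y - x‖ ^ 2 ≤ f y := by
  have hslope : Tendsto (fun t : ℝ => t⁻¹ * (f (x + t • (y - x)) - f x)) (𝓝[>] 0)
      (𝓝 (inner ℝ v (y - x))) := by
    simpa [HasLineDerivAt] using
      (hv.hasFDerivAt.hasLineDerivAt (y - x)).tendsto_slope_zero_right
  linarith [add_le_of_tendsto_of_forall_Ioc hslope fun t ⟨ht₀, ht₁⟩ =>
    hf.slope_add_le hx hy ht₀ ht₁]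

lemma exists_isMinOn [ProperSpace E] (hm : 0 < m) (hf : StrongConvexOn univ m f)
    (hd : Differentiable ℝ f) : ∃ x, IsMinOn f univ x := by
  set v := gradient f 0
  have hcoercive : ∀ y : E, 2 * ‖v‖ / m ≤ ‖y‖ → f 0 ≤ f y := by
    intro y hy
    have hgrad := hf.add_inner_add_sq_le (hd 0).hasGradientAt (mem_univ 0) (mem_univ y)
    rw [sub_zero] at hgrad
    have hcs : -(‖v‖ * ‖y‖) ≤ inner ℝ v y := neg_le_of_abs_le (abs_real_inner_le_norm v y)
    have hlarge : 2 * ‖v‖ ≤ m * ‖y‖ := by rwa [div_le_iff₀' hm] at hy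
    nlinarith [norm_nonneg y]
  have hev : ∀ᶠ y in cocompact E, f 0 ≤ f y :=
    (tendsto_norm_cocompact_atTop.eventually (eventually_ge_atTop _)).mono hcoercive
  obtain ⟨x, hx⟩ := hd.continuous.exists_forall_le' 0 hev
  exact ⟨x, isMinOn_univ_iff.2 hx⟩

lemma existsUnique_isMinOn [ProperSpace E] (hm : 0 < m) (hf : StrongConvexOn univ m f)
    (hd : Differentiable ℝ f) : ∃! x, IsMinOn f univ x := by
  obtain ⟨x, hx⟩ := hf.exists_isMinOn hm hd
  exact ⟨x, hx, fun y hy => (hf.strictConvexOn hm).eq_of_isMinOn hy hx (mem_univ y) (mem_univ x)⟩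

lemma norm_sub_le_of_isMinOn_add [CompleteSpace E] {m' α : ℝ} {g : E → ℝ} {xs xa v : E}
    (hf : StrongConvexOn s m f) (hg : StrongConvexOn s m' g) (hα : 0 ≤ α)
    (hM : 0 < m + α * m') (hv : HasGradientAt g v xs) (hs : IsMinOn f s xs)
    (ha : IsMinOn (fun x => f x + α * g x) s xa) (hxs : xs ∈ s) (hxa : xa ∈ s) :
    ‖xa - xs‖ ≤ α * ‖v‖ / (m + α * m') := by
  have hgrowth_f := hf.add_sq_le_of_isMinOn hs hxs hxa
  have hgrad_g := hg.add_inner_add_sq_le hv hxs hxa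
  have hgrowth_sum := (hf.add (hg.const_mul hα)).add_sq_le_of_isMinOn ha hxa hxs
  rw [norm_sub_rev] at hgrowth_sum
  have hcs : -(‖v‖ * ‖xa - xs‖) ≤ inner ℝ v (xa - xs) :=
    neg_le_of_abs_le (abs_real_inner_le_norm v _)
  have hkey : ‖xa - xs‖ * ((m + α * m') * ‖xa - xs‖) ≤ ‖xa - xs‖ * (α * ‖v‖) := by
    nlinarith [mul_le_mul_of_nonneg_left hcs hα]
  rw [le_div_iff₀ hM]
  rcases (norm_nonneg (xa - xs)).eq_or_lt with hzero | hpos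
  · rw [← hzero, zero_mul]
    exact mul_nonneg hα (norm_nonneg v)
  · linarith [le_of_mul_le_mul_left hkey hpos]

end InnerProductSpace

end StrongConvexOn

theorem parameter_shift_bound {p n : ℕ} (μ : ℝ) (hμ : 0 < μ)
    (ℓ : Fin n → EuclideanSpace ℝ (Fin p) → ℝ)
    (hℓconv : ∀ i, StrongConvexOn Set.univ μ (ℓ i))
    (hℓdiff : ∀ i, Differentiable ℝ (ℓ i))
    (L : EuclideanSpace ℝ (Fin p) → ℝ)
    (hL : L = fun θ => (1 / n : ℝ) * ∑ i, ℓ i θ)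
    (ℓz : EuclideanSpace ℝ (Fin p) → ℝ)
    (hℓzconv : StrongConvexOn Set.univ μ ℓz)
    (hℓzdiff : Differentiable ℝ ℓz)
    (α : ℝ) (hα : 0 ≤ α) (hn : 0 < n) :
    (∃! θs, IsMinOn L Set.univ θs) ∧
      (∃! θa, IsMinOn (fun θ => L θ + α * ℓz θ) Set.univ θa) ∧
      ∀ θs θa, IsMinOn L Set.univ θs →
        IsMinOn (fun θ => L θ + α * ℓz θ) Set.univ θa →
        ‖θa - θs‖ ≤ α * ‖gradient ℓz θs‖ / ((1 + α) * μ) := by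
  have hLconv : StrongConvexOn univ μ L := by
    have h := (StrongConvexOn.sum convex_univ fun i (_ : i ∈ Finset.univ) => hℓconv i).const_mul
      (c := 1 / n) (by positivity)
    rwa [Finset.card_univ, Fintype.card_fin, ← mul_assoc, one_div_mul_cancel (by positivity),
      one_mul, ← hL] at h
  have hLdiff : Differentiable ℝ L := hL ▸ (Differentiable.fun_sum fun i _ => hℓdiff i).const_mul _
  have hsum_eq : μ + α * μ = (1 + α) * μ := by ring
  have hreg_conv := hLconv.add (hℓzconv.const_mul hα)
  rw [hsum_eq] at hreg_conv
  refine ⟨hLconv.existsUnique_isMinOn hμ hLdiff,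
    hreg_conv.existsUnique_isMinOn (by positivity) (hLdiff.add (hℓzdiff.const_mul α)),
    fun θs θa hs ha => ?_⟩
  rw [← hsum_eq]
  exact hLconv.norm_sub_le_of_isMinOn_add hℓzconv hα (by positivity) (hℓzdiff θs).hasGradientAt
    hs ha (mem_univ θs) (mem_univ θa)
end

section
/- Let f: ℝᵖ → ℝ be twice continuously differentiable with L-Lipschitz gradient, bounded below by f*. For SGD-type iterates x_{t+1} = x_t − ρ d_t where d_t satisfies ⟨∇f(x_t), d_t⟩ ≥ ‖∇f(x_t)‖² − δ_t and ‖d_t‖ ≤ G, with step ρ ≤ 1/L, after T steps min_{0≤t<T} ‖∇f(x_t)‖² ≤ 2(f(x₀) − f*)/(ρT) + (2/T)∑_t δ_t + ρLG². -/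
/-! By the descent lemma for an `L`-smooth function, each inexact step decreases `f` by at least
`ρ ‖∇f(xₜ)‖² - ρ δₜ - (L/2) ρ² G²`. Summing over `t < T`, the values of `f` telescope and are
bounded below by `f*`, so the mean of `‖∇f(xₜ)‖²` over `t < T`, and hence its minimum, is at most
`(f(x₀) - f*)/(ρT) + (1/T) ∑ δₜ + ρLG²/2`. -/

open Finset Set
open scoped Gradient RealInnerProductSpace

section Descent

variable {F : Type*} [NormedAddCommGroup F] [InnerProductSpace ℝ F] [CompleteSpace F]
  {f : F → ℝ} {L : NNReal}

lemma hasDerivAt_comp_add_smul {x v : F} {t : ℝ} (hf : DifferentiableAt ℝ f (x + t • v)) :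
    HasDerivAt (fun s : ℝ ↦ f (x + s • v)) ⟪∇ f (x + t • v), v⟫ t := by
  have hline : HasDerivAt (fun s : ℝ ↦ x + s • v) v t := by
    simpa using ((hasDerivAt_id t).smul_const v).const_add x
  have := hf.hasFDerivAt.comp_hasDerivAt t hline
  rwa [← inner_gradient_left] at this

lemma inner_gradient_add_smul_le (hLip : LipschitzWith L (∇ f)) (x v : F) {t : ℝ} (ht : 0 ≤ t) :
    ⟪∇ f (x + t • v), v⟫ ≤ ⟪∇ f x, v⟫ + L * t * ‖v‖ ^ 2 := by
  have hdist : ‖∇ f (x + t • v) - ∇ f x‖ ≤ L * (t * ‖v‖) := by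
    simpa [dist_eq_norm, norm_smul, abs_of_nonneg ht] using hLip.dist_le_mul (x + t • v) x
  calc ⟪∇ f (x + t • v), v⟫
      = ⟪∇ f x, v⟫ + ⟪∇ f (x + t • v) - ∇ f x, v⟫ := by rw [inner_sub_left]; ring
    _ ≤ ⟪∇ f x, v⟫ + ‖∇ f (x + t • v) - ∇ f x‖ * ‖v‖ := by
      gcongr; exact real_inner_le_norm _ _
    _ ≤ ⟪∇ f x, v⟫ + L * (t * ‖v‖) * ‖v‖ := by gcongr
    _ = ⟪∇ f x, v⟫ + L * t * ‖v‖ ^ 2 := by ring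

lemma apply_add_le_of_lipschitzWith_gradient (hf : Differentiable ℝ f)
    (hLip : LipschitzWith L (∇ f)) (x v : F) :
    f (x + v) ≤ f x + ⟪∇ f x, v⟫ + L / 2 * ‖v‖ ^ 2 := by
  have hφ : ∀ t : ℝ, HasDerivAt (fun s : ℝ ↦ f (x + s • v)) ⟪∇ f (x + t • v), v⟫ t :=
    fun t ↦ hasDerivAt_comp_add_smul (hf _)
  have hB : ∀ t : ℝ, HasDerivAt (fun s : ℝ ↦ f x + s * ⟪∇ f x, v⟫ + L / 2 * s ^ 2 * ‖v‖ ^ 2)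
      (⟪∇ f x, v⟫ + L * t * ‖v‖ ^ 2) t := by
    intro t
    have := ((hasDerivAt_mul_const ⟪∇ f x, v⟫).const_add (f x)).add
      (((hasDerivAt_pow 2 t).const_mul ((L : ℝ) / 2)).mul_const (‖v‖ ^ 2))
    exact this.congr_deriv (by push_cast; ring_nf)
  -- Compare `s ↦ f (x + s • v)` on `[0, 1]` with the quadratic majorant through its value at `0`.
  have := image_le_of_deriv_right_le_deriv_boundary (a := 0) (b := 1)
    (fun t _ ↦ (hφ t).continuousAt.continuousWithinAt) (fun t _ ↦ (hφ t).hasDerivWithinAt)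
    (by simp) (fun t _ ↦ (hB t).continuousAt.continuousWithinAt)
    (fun t _ ↦ (hB t).hasDerivWithinAt) (fun t ht ↦ inner_gradient_add_smul_le hLip x v ht.1)
    (right_mem_Icc.2 zero_le_one)
  simpa using this

lemma mul_norm_gradient_sq_le_of_inexact_step (hf : Differentiable ℝ f)
    (hLip : LipschitzWith L (∇ f)) {ρ δ G : ℝ} (hρ : 0 ≤ ρ) {x d : F}
    (hd1 : ‖∇ f x‖ ^ 2 - δ ≤ ⟪∇ f x, d⟫) (hd2 : ‖d‖ ≤ G) :
    ρ * ‖∇ f x‖ ^ 2 ≤ f x - f (x - ρ • d) + (ρ * δ + L / 2 * ρ ^ 2 * G ^ 2) := by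
  have hdesc := apply_add_le_of_lipschitzWith_gradient hf hLip x (-(ρ • d))
  rw [← sub_eq_add_neg, inner_neg_right, real_inner_smul_right, norm_neg, norm_smul,
    Real.norm_of_nonneg hρ] at hdesc
  have hdG : ‖d‖ ^ 2 ≤ G ^ 2 := pow_le_pow_left₀ (norm_nonneg d) hd2 2
  nlinarith [mul_le_mul_of_nonneg_left hd1 hρ,
    mul_le_mul_of_nonneg_left hdG (by positivity : (0 : ℝ) ≤ L / 2 * ρ ^ 2)]

end Descent

lemma sum_range_le_sub_add_sum_of_le_sub_succ {a b u : ℕ → ℝ} {m : ℝ}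
    (h : ∀ t, a t ≤ u t - u (t + 1) + b t) (hm : ∀ t, m ≤ u t) (T : ℕ) :
    ∑ t ∈ range T, a t ≤ u 0 - m + ∑ t ∈ range T, b t := by
  calc ∑ t ∈ range T, a t ≤ ∑ t ∈ range T, (u t - u (t + 1) + b t) := sum_le_sum fun t _ ↦ h t
    _ = u 0 - u T + ∑ t ∈ range T, b t := by rw [sum_add_distrib, sum_range_sub']
    _ ≤ u 0 - m + ∑ t ∈ range T, b t := by linarith [hm T]

lemma exists_lt_le_div_of_mul_sum_range_le {a : ℕ → ℝ} {ρ B : ℝ} {T : ℕ} (hT : 0 < T)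
    (hρ : 0 < ρ) (h : ρ * ∑ t ∈ range T, a t ≤ B) : ∃ t < T, a t ≤ B / (ρ * T) := by
  have hmean : ∑ t ∈ range T, a t ≤ ∑ _ ∈ range T, B / (ρ * T) := by
    have hT' : (T : ℝ) ≠ 0 := by positivity
    have hcancel : (T : ℝ) * (B / (ρ * T)) = B / ρ := by field_simp
    rw [sum_const, card_range, nsmul_eq_mul, hcancel, le_div_iff₀' hρ]
    exact h
  obtain ⟨t, ht, hle⟩ := exists_le_of_sum_le (nonempty_range_iff.2 hT.ne') hmean
  exact ⟨t, mem_range.1 ht, hle⟩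

theorem inexact_gradient_descent_bound_general {p : ℕ}
    (f : EuclideanSpace ℝ (Fin p) → ℝ) (hf : ContDiff ℝ 2 f)
    (L : NNReal) (hLip : LipschitzWith L (gradient f))
    (fstar : ℝ) (hbdd : ∀ x, fstar ≤ f x)
    (ρ : ℝ) (hρ : 0 < ρ)
    (G : ℝ) (δ : ℕ → ℝ)
    (x d : ℕ → EuclideanSpace ℝ (Fin p))
    (hx : ∀ t, x (t + 1) = x t - ρ • d t)
    (hd1 : ∀ t, ‖gradient f (x t)‖ ^ 2 - δ t ≤ inner ℝ (gradient f (x t)) (d t))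
    (hd2 : ∀ t, ‖d t‖ ≤ G)
    (T : ℕ) (hT : 0 < T) :
    ∃ t < T, ‖gradient f (x t)‖ ^ 2 ≤
      2 * (f (x 0) - fstar) / (ρ * T) +
        (2 / T) * ∑ s ∈ Finset.range T, δ s + ρ * L * G ^ 2 := by
  have hstep (t : ℕ) : ρ * ‖∇ f (x t)‖ ^ 2 ≤
      f (x t) - f (x (t + 1)) + (ρ * δ t + L / 2 * ρ ^ 2 * G ^ 2) := by
    rw [hx]
    exact mul_norm_gradient_sq_le_of_inexact_step (hf.differentiable (by norm_num)) hLip hρ.le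
      (hd1 t) (hd2 t)
  have hsum := sum_range_le_sub_add_sum_of_le_sub_succ hstep (fun t ↦ hbdd (x t)) T
  rw [← mul_sum] at hsum
  obtain ⟨t, htT, ht⟩ := exists_lt_le_div_of_mul_sum_range_le hT hρ hsum
  refine ⟨t, htT, ht.trans ?_⟩
  have hB_nonneg := (mul_nonneg hρ.le (sum_nonneg fun s _ ↦ sq_nonneg ‖∇ f (x s)‖)).trans hsum
  rw [sum_add_distrib, ← mul_sum, sum_const, card_range, nsmul_eq_mul] at hB_nonneg ⊢
  have hTpos : (0 : ℝ) < T := Nat.cast_pos.2 hT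
  calc _ ≤ 2 * ((f (x 0) - fstar + (ρ * ∑ s ∈ range T, δ s + T * (L / 2 * ρ ^ 2 * G ^ 2))) /
        (ρ * T)) := by linarith [div_nonneg hB_nonneg (by positivity : (0 : ℝ) ≤ ρ * T)]
    _ = _ := by field_simp; ring

theorem inexact_gradient_descent_bound {p : ℕ}
    (f : EuclideanSpace ℝ (Fin p) → ℝ) (hf : ContDiff ℝ 2 f)
    (L : NNReal) (hL : 0 < L) (hLip : LipschitzWith L (gradient f))
    (fstar : ℝ) (hbdd : ∀ x, fstar ≤ f x)
    (ρ : ℝ) (hρ : 0 < ρ) (hρL : ρ ≤ 1 / (L : ℝ))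
    (G : ℝ) (δ : ℕ → ℝ)
    (x d : ℕ → EuclideanSpace ℝ (Fin p))
    (hx : ∀ t, x (t + 1) = x t - ρ • d t)
    (hd1 : ∀ t, ‖gradient f (x t)‖ ^ 2 - δ t ≤ inner ℝ (gradient f (x t)) (d t))
    (hd2 : ∀ t, ‖d t‖ ≤ G)
    (T : ℕ) (hT : 0 < T) :
    ∃ t < T, ‖gradient f (x t)‖ ^ 2 ≤
      2 * (f (x 0) - fstar) / (ρ * T) +
        (2 / T) * ∑ s ∈ Finset.range T, δ s + ρ * L * G ^ 2 :=
  inexact_gradient_descent_bound_general f hf L hLip fstar hbdd ρ hρ G δ x d hx hd1 hd2 T hT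
end
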